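/- arXiv:2210.09721 — 2 statements merged into one kernel-verified Lean document; each statement's English description precedes it below -/
import Mathlib

section
/- Let n, m ∈ ℕ, let L ⊆ {1,…,n}, and for each i let f_i : ℝ → ℝ be globally Lipschitz with constant L_{pi} > 0 when i ∈ L, and f_i = id with L_{pi} = 1 when i ∉ L. Let W = diag(L_{p1},…,L_{pn}), A ∈ ℝ^{n×n}, B ∈ ℝ^{n×m}, Ã = W A. Suppose there exists a symmetric positive definite P ∈ ℝ^{n×n} with P_{ij} = P_{ji} = 0 for every i ∈ L and every j ≠ i such that Ã^T P Ã − P is negative definite. Define V(x1, x2) = (x1 − x2)^T P (x1 − x2). Then there exist constants c1 > 0 and c2 ≥ 0 such that for all x1, x2 ∈ ℝ^n and u1, u2 ∈ ℝ^m: V(f(A x1 + B u1), f(A x2 + B u2)) − V(x1, x2) ≤ −c1 ‖x1 − x2‖² + c2 ‖u1 − u2‖², where f is applied componentwise and norms are Euclidean. -/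
open Matrix

/-- Euclidean norm of a finitely-indexed real vector. -/
noncomputable def eNorm {ι : Type*} [Fintype ι] (v : ι → ℝ) : ℝ :=
  Real.sqrt (∑ i, (v i) ^ 2)

/-!
Put `z = x₁ - x₂`, `w = u₁ - u₂`, `Ã = W A`, `B̃ = W B`. Componentwise, the increment of `f` is
bounded in absolute value by the entry of `W (A z + B w) = Ã z + B̃ w`, with equality off `L`.
Since the rows and columns of `P` indexed by `L` vanish off the diagonal, the quadratic form of
`P` only sees these entries through their squares there, so
`V(f(A x₁ + B u₁), f(A x₂ + B u₂)) ≤ (Ã z + B̃ w)ᵀ P (Ã z + B̃ w)`. Expanding, the part quadratic in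
`z` is `zᵀ (ÃᵀPÃ - P) z ≤ -λ‖z‖²` by compactness of the unit sphere, and Young's inequality
absorbs the cross terms into half of it.
-/

theorem exists_pos_mul_norm_sq_le {E : Type*} [NormedAddCommGroup E] [NormedSpace ℝ E]
    [FiniteDimensional ℝ E] {q : E → ℝ} (hq : Continuous q)
    (hsmul : ∀ (t : ℝ) x, q (t • x) = t ^ 2 * q x) (hpos : ∀ x, x ≠ 0 → 0 < q x) :
    ∃ c, 0 < c ∧ ∀ x, c * ‖x‖ ^ 2 ≤ q x := by
  have hq0 : q 0 = 0 := by simpa using hsmul 0 0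
  rcases subsingleton_or_nontrivial E with _ | _
  · exact ⟨1, one_pos, fun x => by simp [Subsingleton.elim x 0, hq0]⟩
  obtain ⟨x₀, hx₀, hmin⟩ := (isCompact_sphere (0 : E) 1).exists_isMinOn
    (NormedSpace.sphere_nonempty.mpr zero_le_one) hq.continuousOn
  have hx₀ne : x₀ ≠ 0 := ne_zero_of_mem_unit_sphere ⟨x₀, hx₀⟩
  refine ⟨q x₀, hpos x₀ hx₀ne, fun x => ?_⟩
  rcases eq_or_ne x 0 with rfl | hx
  · simp [hq0]
  have hunit : ‖x‖⁻¹ • x ∈ Metric.sphere (0 : E) 1 := by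
    simp [norm_smul, hx]
  calc q x₀ * ‖x‖ ^ 2 ≤ ‖x‖ ^ 2 * q (‖x‖⁻¹ • x) := by
        rw [mul_comm]; exact mul_le_mul_of_nonneg_left (hmin hunit) (sq_nonneg _)
    _ = q x := by
        rw [← hsmul, smul_smul, mul_inv_cancel₀ (norm_ne_zero_iff.mpr hx), one_smul]

section

variable {ι κ μ : Type*} [Fintype ι] [Fintype κ] [Fintype μ]

theorem eNorm_eq_norm (v : ι → ℝ) : eNorm v = ‖(WithLp.toLp 2 v : EuclideanSpace ℝ ι)‖ := by
  simp [eNorm, EuclideanSpace.norm_eq]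

theorem eNorm_nonneg (v : ι → ℝ) : 0 ≤ eNorm v :=
  Real.sqrt_nonneg _

theorem abs_le_eNorm (v : ι → ℝ) (i : ι) : |v i| ≤ eNorm v := by
  simpa [eNorm_eq_norm] using PiLp.norm_apply_le (WithLp.toLp 2 v : EuclideanSpace ℝ ι) i

theorem exists_dotProduct_mulVec_le (N : Matrix ι κ ℝ) :
    ∃ C, 0 ≤ C ∧ ∀ z w, z ⬝ᵥ (N *ᵥ w) ≤ C * (eNorm z * eNorm w) := by
  refine ⟨∑ i, ∑ j, |N i j|, by positivity, fun z w => ?_⟩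
  simp only [dotProduct, mulVec, Finset.mul_sum, Finset.sum_mul]
  refine Finset.sum_le_sum fun i _ => Finset.sum_le_sum fun j _ => ?_
  calc z i * (N i j * w j) ≤ |z i| * (|N i j| * |w j|) := by
        rw [← abs_mul, ← abs_mul]; exact le_abs_self _
    _ ≤ eNorm z * (|N i j| * eNorm w) := by
        gcongr
        exacts [eNorm_nonneg z, abs_le_eNorm z i, abs_le_eNorm w j]
    _ = |N i j| * (eNorm z * eNorm w) := by ring

theorem exists_pos_mul_eNorm_sq_le (M : Matrix ι ι ℝ)
    (hM : ∀ v : ι → ℝ, v ≠ 0 → 0 < v ⬝ᵥ (M *ᵥ v)) :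
    ∃ c, 0 < c ∧ ∀ v, c * eNorm v ^ 2 ≤ v ⬝ᵥ (M *ᵥ v) := by
  obtain ⟨c, hc, hle⟩ := exists_pos_mul_norm_sq_le
    (E := EuclideanSpace ℝ ι) (q := fun x => x.ofLp ⬝ᵥ (M *ᵥ x.ofLp))
    (by fun_prop) (fun t x => by simp [mulVec_smul]; ring)
    (fun x hx => hM _ (by simpa using hx))
  exact ⟨c, hc, fun v => by simpa [eNorm_eq_norm] using hle (WithLp.toLp 2 v)⟩

theorem dotProduct_mulVec_le_of_abs_le (L : Finset ι)
    (P : Matrix ι ι ℝ) (hPdiag : ∀ i ∈ L, 0 ≤ P i i)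
    (hPstruct : ∀ i ∈ L, ∀ j, j ≠ i → P i j = 0 ∧ P j i = 0) {y z : ι → ℝ}
    (habs : ∀ i ∈ L, |y i| ≤ |z i|) (heq : ∀ i ∉ L, y i = z i) :
    y ⬝ᵥ (P *ᵥ y) ≤ z ⬝ᵥ (P *ᵥ z) := by
  rw [dot_mulVec_eq_sum_sum, dot_mulVec_eq_sum_sum]
  refine Finset.sum_le_sum fun j _ => Finset.sum_le_sum fun i _ => ?_
  by_cases hi : i ∈ L
  · by_cases hji : j = i
    · subst hji
      have hsq : y j * y j ≤ z j * z j := by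
        simpa only [abs_mul_abs_self] using mul_self_le_mul_self (abs_nonneg _) (habs j hi)
      nlinarith [hPdiag j hi]
    · simp [(hPstruct i hi j hji).1]
  · by_cases hj : j ∈ L
    · simp [(hPstruct j hj i (fun h => hi (h ▸ hj))).2]
    · rw [heq i hi, heq j hj]

theorem dotProduct_mulVec_map_sub_le [DecidableEq ι] (L : Finset ι)
    (f : ι → ℝ → ℝ) (Lp : ι → ℝ)
    (hLip : ∀ i ∈ L, 0 < Lp i ∧ ∀ a b : ℝ, |f i a - f i b| ≤ Lp i * |a - b|)
    (hid : ∀ i ∉ L, f i = id ∧ Lp i = 1) (P : Matrix ι ι ℝ) (hPdiag : ∀ i ∈ L, 0 ≤ P i i)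
    (hPstruct : ∀ i ∈ L, ∀ j, j ≠ i → P i j = 0 ∧ P j i = 0) (v₁ v₂ : ι → ℝ) :
    ((fun i => f i (v₁ i)) - fun i => f i (v₂ i)) ⬝ᵥ
        (P *ᵥ ((fun i => f i (v₁ i)) - fun i => f i (v₂ i))) ≤
      (diagonal Lp *ᵥ (v₁ - v₂)) ⬝ᵥ (P *ᵥ (diagonal Lp *ᵥ (v₁ - v₂))) := by
  refine dotProduct_mulVec_le_of_abs_le L P hPdiag hPstruct (fun i hi => ?_) (fun i hi => ?_)
  · obtain ⟨hpos, hlip⟩ := hLip i hi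
    simpa [mulVec_diagonal, abs_mul, abs_of_pos hpos] using hlip (v₁ i) (v₂ i)
  · obtain ⟨hf, h1⟩ := hid i hi
    simp [mulVec_diagonal, hf, h1]

theorem dotProduct_mulVec_mulVec (M : Matrix ι κ ℝ) (P : Matrix ι ι ℝ) (N : Matrix ι μ ℝ)
    (a : κ → ℝ) (b : μ → ℝ) :
    (M *ᵥ a) ⬝ᵥ (P *ᵥ (N *ᵥ b)) = a ⬝ᵥ ((Mᵀ * P * N) *ᵥ b) := by
  rw [← mulVec_mulVec, ← mulVec_mulVec, dotProduct_transpose_mulVec, dotProduct_comm]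

theorem exists_dissipation_of_negDef (A : Matrix ι ι ℝ) (B : Matrix ι κ ℝ) (P : Matrix ι ι ℝ)
    (hNeg : ∀ v : ι → ℝ, v ≠ 0 → v ⬝ᵥ ((Aᵀ * P * A - P) *ᵥ v) < 0) :
    ∃ c₁, 0 < c₁ ∧ ∃ c₂, 0 ≤ c₂ ∧ ∀ z w,
      (A *ᵥ z + B *ᵥ w) ⬝ᵥ (P *ᵥ (A *ᵥ z + B *ᵥ w)) - z ⬝ᵥ (P *ᵥ z) ≤
        -c₁ * eNorm z ^ 2 + c₂ * eNorm w ^ 2 := by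
  obtain ⟨l, hl, hdecay⟩ := exists_pos_mul_eNorm_sq_le (-(Aᵀ * P * A - P))
    (fun v hv => by rw [neg_mulVec, dotProduct_neg]; exact neg_pos.mpr (hNeg v hv))
  obtain ⟨C₁, hC₁, hAB⟩ := exists_dotProduct_mulVec_le (Aᵀ * P * B)
  obtain ⟨C₂, hC₂, hBA⟩ := exists_dotProduct_mulVec_le (Bᵀ * P * A)
  obtain ⟨C₃, hC₃, hBB⟩ := exists_dotProduct_mulVec_le (Bᵀ * P * B)
  refine ⟨l / 2, half_pos hl, (C₁ + C₂) ^ 2 / (2 * l) + C₃, by positivity, fun z w => ?_⟩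
  have hexpand : (A *ᵥ z + B *ᵥ w) ⬝ᵥ (P *ᵥ (A *ᵥ z + B *ᵥ w)) - z ⬝ᵥ (P *ᵥ z) =
      z ⬝ᵥ ((Aᵀ * P * A - P) *ᵥ z) + z ⬝ᵥ ((Aᵀ * P * B) *ᵥ w) +
        w ⬝ᵥ ((Bᵀ * P * A) *ᵥ z) + w ⬝ᵥ ((Bᵀ * P * B) *ᵥ w) := by
    simp only [mulVec_add, add_dotProduct, dotProduct_add, dotProduct_mulVec_mulVec, sub_mulVec,
      dotProduct_sub]
    ring
  have hyoung : (C₁ + C₂) * (eNorm z * eNorm w) ≤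
      l / 2 * eNorm z ^ 2 + (C₁ + C₂) ^ 2 / (2 * l) * eNorm w ^ 2 := by
    have hsq : l / 2 * eNorm z ^ 2 + (C₁ + C₂) ^ 2 / (2 * l) * eNorm w ^ 2 -
        (C₁ + C₂) * (eNorm z * eNorm w) = (l * eNorm z - (C₁ + C₂) * eNorm w) ^ 2 / (2 * l) := by
      field_simp
      ring
    have : 0 ≤ (l * eNorm z - (C₁ + C₂) * eNorm w) ^ 2 / (2 * l) := by positivity
    linarith
  have hz := hdecay z
  rw [neg_mulVec, dotProduct_neg] at hz
  rw [hexpand]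
  linarith [hAB z w, hBA w z, hBB w w]

end

theorem lyapunov_decrease_general
    (n m : ℕ) (L : Finset (Fin n)) (f : Fin n → ℝ → ℝ) (Lp : Fin n → ℝ)
    (hLip : ∀ i ∈ L, 0 < Lp i ∧ ∀ a b : ℝ, |f i a - f i b| ≤ Lp i * |a - b|)
    (hid : ∀ i ∉ L, f i = id ∧ Lp i = 1)
    (A : Matrix (Fin n) (Fin n) ℝ) (B : Matrix (Fin n) (Fin m) ℝ)
    (P : Matrix (Fin n) (Fin n) ℝ)
    (hPpos : ∀ v : Fin n → ℝ, v ≠ 0 → 0 < v ⬝ᵥ (P *ᵥ v))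
    (hPstruct : ∀ i ∈ L, ∀ j : Fin n, j ≠ i → P i j = 0 ∧ P j i = 0)
    (hNeg : ∀ v : Fin n → ℝ, v ≠ 0 →
      v ⬝ᵥ (((Matrix.diagonal Lp * A)ᵀ * P * (Matrix.diagonal Lp * A) - P) *ᵥ v) < 0) :
    ∃ c1 : ℝ, 0 < c1 ∧ ∃ c2 : ℝ, 0 ≤ c2 ∧
      ∀ (x1 x2 : Fin n → ℝ) (u1 u2 : Fin m → ℝ),
        ((fun i => f i ((A *ᵥ x1 + B *ᵥ u1) i)) - (fun i => f i ((A *ᵥ x2 + B *ᵥ u2) i)))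
            ⬝ᵥ (P *ᵥ ((fun i => f i ((A *ᵥ x1 + B *ᵥ u1) i))
              - (fun i => f i ((A *ᵥ x2 + B *ᵥ u2) i))))
          - (x1 - x2) ⬝ᵥ (P *ᵥ (x1 - x2))
        ≤ -c1 * (eNorm (x1 - x2)) ^ 2 + c2 * (eNorm (u1 - u2)) ^ 2 := by
  obtain ⟨c₁, hc₁, c₂, hc₂, hdiss⟩ :=
    exists_dissipation_of_negDef (diagonal Lp * A) (diagonal Lp * B) P hNeg
  refine ⟨c₁, hc₁, c₂, hc₂, fun x₁ x₂ u₁ u₂ => ?_⟩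
  have hPdiag : ∀ i ∈ L, 0 ≤ P i i := fun i _ => by
    simpa using (hPpos (Pi.single i 1) (by simp)).le
  have hlin : (diagonal Lp * A) *ᵥ (x₁ - x₂) + (diagonal Lp * B) *ᵥ (u₁ - u₂) =
      diagonal Lp *ᵥ ((A *ᵥ x₁ + B *ᵥ u₁) - (A *ᵥ x₂ + B *ᵥ u₂)) := by
    rw [← mulVec_mulVec, ← mulVec_mulVec, ← mulVec_add, mulVec_sub, mulVec_sub]
    congr 1
    abel
  have hsector := dotProduct_mulVec_map_sub_le L f Lp hLip hid P hPdiag hPstruct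
    (A *ᵥ x₁ + B *ᵥ u₁) (A *ᵥ x₂ + B *ᵥ u₂)
  have := hdiss (x₁ - x₂) (u₁ - u₂)
  rw [hlin] at this
  linarith

/-- **Dissipation-form Lyapunov decrease inequality** from the proof of the paper's main
δISS theorem: under the structured Lyapunov condition `Ãᵀ P Ã - P ≺ 0`, the function
`V(x1,x2) = (x1-x2)ᵀ P (x1-x2)` satisfies
`V(f(Ax1+Bu1), f(Ax2+Bu2)) - V(x1,x2) ≤ -c1‖x1-x2‖² + c2‖u1-u2‖²`
for some `c1 > 0`, `c2 ≥ 0`. -/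
theorem lyapunov_decrease
    (n m : ℕ) (L : Finset (Fin n)) (f : Fin n → ℝ → ℝ) (Lp : Fin n → ℝ)
    (hLip : ∀ i ∈ L, 0 < Lp i ∧ ∀ a b : ℝ, |f i a - f i b| ≤ Lp i * |a - b|)
    (hid : ∀ i ∉ L, f i = id ∧ Lp i = 1)
    (A : Matrix (Fin n) (Fin n) ℝ) (B : Matrix (Fin n) (Fin m) ℝ)
    (P : Matrix (Fin n) (Fin n) ℝ)
    (hPsym : Pᵀ = P)
    (hPpos : ∀ v : Fin n → ℝ, v ≠ 0 → 0 < v ⬝ᵥ (P *ᵥ v))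
    (hPstruct : ∀ i ∈ L, ∀ j : Fin n, j ≠ i → P i j = 0 ∧ P j i = 0)
    (hNeg : ∀ v : Fin n → ℝ, v ≠ 0 →
      v ⬝ᵥ (((Matrix.diagonal Lp * A)ᵀ * P * (Matrix.diagonal Lp * A) - P) *ᵥ v) < 0) :
    ∃ c1 : ℝ, 0 < c1 ∧ ∃ c2 : ℝ, 0 ≤ c2 ∧
      ∀ (x1 x2 : Fin n → ℝ) (u1 u2 : Fin m → ℝ),
        ((fun i => f i ((A *ᵥ x1 + B *ᵥ u1) i)) - (fun i => f i ((A *ᵥ x2 + B *ᵥ u2) i)))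
            ⬝ᵥ (P *ᵥ ((fun i => f i ((A *ᵥ x1 + B *ᵥ u1) i))
              - (fun i => f i ((A *ᵥ x2 + B *ᵥ u2) i))))
          - (x1 - x2) ⬝ᵥ (P *ᵥ (x1 - x2))
        ≤ -c1 * (eNorm (x1 - x2)) ^ 2 + c2 * (eNorm (u1 - u2)) ^ 2 :=
  lyapunov_decrease_general n m L f Lp hLip hid A B P hPpos hPstruct hNeg
end

section
/- Let A ∈ ℝ^{n×n} and let W = diag(L_{p1},…,L_{pn}) with L_{pi} > 0 for all i. Denote by |A| the matrix with entries |a_{ij}|, and set M̂ = W|A| and Ã = W A. If there exists a symmetric positive definite matrix P ∈ ℝ^{n×n} such that M̂^T P M̂ − P is negative definite, then there exists a diagonal matrix D ∈ ℝ^{n×n} with strictly positive diagonal entries such that Ã^T D Ã − D is negative definite. -/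
/-! If `M = W|A|` satisfies `MᵀPM - P ≺ 0`, the form `vᵀPv` drops by at least `ε‖v‖²` along
orbits of `M`, so `∑ₖ ‖Mᵏv‖²` converges and `Mᵏ → 0`. As `M ≥ 0`, truncating the Neumann
series `∑ₖ Mᵏ 1` gives `x, y > 0` with `Mx < x` and `Mᵀy < y`, and Cauchy–Schwarz row by row
shows that `d = y / x` satisfies `∑ dᵢ (Mv)ᵢ² < ∑ dᵢ vᵢ²` for `v ≠ 0`. Finally `|Ãv| ≤ M|v|`
entrywise, because `|Ã| = M`, so the same diagonal `D = diag d` works for `Ã`. -/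

open Matrix

/-- Symmetric positive definiteness of a real matrix. -/
def PosDefM {ι : Type*} [Fintype ι] (P : Matrix ι ι ℝ) : Prop :=
  Pᵀ = P ∧ ∀ v : ι → ℝ, v ≠ 0 → 0 < v ⬝ᵥ (P *ᵥ v)

/-- Negative definiteness of a real matrix. -/
def NegDefM {ι : Type*} [Fintype ι] (Q : Matrix ι ι ℝ) : Prop :=
  ∀ v : ι → ℝ, v ≠ 0 → v ⬝ᵥ (Q *ᵥ v) < 0

/-- Entrywise absolute value of a matrix. -/
def absM {ι κ : Type*} (A : Matrix ι κ ℝ) : Matrix ι κ ℝ :=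
  Matrix.of fun i j => |A i j|

open Filter Topology Finset

theorem exists_pos_mul_sq_norm_le {E : Type*} [NormedAddCommGroup E] [NormedSpace ℝ E]
    [FiniteDimensional ℝ E] {f : E → ℝ} (hf : Continuous f)
    (hhom : ∀ (c : ℝ) v, f (c • v) = c ^ 2 * f v) (hpos : ∀ v, v ≠ 0 → 0 < f v) :
    ∃ ε > 0, ∀ v, ε * ‖v‖ ^ 2 ≤ f v := by
  have hf0 : f 0 = 0 := by simpa using hhom 0 0
  rcases subsingleton_or_nontrivial E with hE | hE
  · exact ⟨1, one_pos, fun v => by simp [Subsingleton.elim v 0, hf0]⟩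
  obtain ⟨u, hu, hmin⟩ := (isCompact_sphere (0 : E) 1).exists_isMinOn
    (NormedSpace.sphere_nonempty.2 zero_le_one) hf.continuousOn
  have hu0 : u ≠ 0 := ne_zero_of_mem_sphere one_ne_zero ⟨u, hu⟩
  refine ⟨f u, hpos u hu0, fun v => ?_⟩
  rcases eq_or_ne v 0 with rfl | hv
  · simp [hf0]
  have hv' : ‖v‖⁻¹ • v ∈ Metric.sphere (0 : E) 1 := by
    simp [norm_smul, hv]
  calc f u * ‖v‖ ^ 2 ≤ f (‖v‖⁻¹ • v) * ‖v‖ ^ 2 := by gcongr; exact hmin hv'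
    _ = f v := by
      rw [hhom]
      field_simp

theorem dotProduct_mulVec_smul_self {ι : Type*} [Fintype ι] (Q : Matrix ι ι ℝ) (c : ℝ)
    (v : ι → ℝ) : (c • v) ⬝ᵥ (Q *ᵥ (c • v)) = c ^ 2 * (v ⬝ᵥ (Q *ᵥ v)) := by
  rw [mulVec_smul, smul_dotProduct, dotProduct_smul, smul_eq_mul, smul_eq_mul]
  ring

theorem dotProduct_mulVec_lyapunov {ι : Type*} [Fintype ι] (M P : Matrix ι ι ℝ) (v : ι → ℝ) :
    v ⬝ᵥ ((Mᵀ * P * M - P) *ᵥ v) = (M *ᵥ v) ⬝ᵥ (P *ᵥ (M *ᵥ v)) - v ⬝ᵥ (P *ᵥ v) := by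
  rw [sub_mulVec, dotProduct_sub, Matrix.mul_assoc, ← mulVec_mulVec, ← mulVec_mulVec,
    dotProduct_mulVec, vecMul_transpose]

theorem dotProduct_diagonal_mulVec_self {ι : Type*} [Fintype ι] [DecidableEq ι] (d v : ι → ℝ) :
    v ⬝ᵥ (diagonal d *ᵥ v) = ∑ i, d i * v i ^ 2 := by
  simp only [dotProduct, mulVec_diagonal]
  exact sum_congr rfl fun i _ => by ring

theorem PosDefM.dotProduct_mulVec_nonneg {ι : Type*} [Fintype ι] {P : Matrix ι ι ℝ}
    (hP : PosDefM P) (v : ι → ℝ) : 0 ≤ v ⬝ᵥ (P *ᵥ v) := by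
  rcases eq_or_ne v 0 with rfl | hv
  · simp
  · exact (hP.2 v hv).le

theorem absM_diagonal_mul {ι κ : Type*} [Fintype ι] [DecidableEq ι] {w : ι → ℝ}
    (hw : ∀ i, 0 ≤ w i) (A : Matrix ι κ ℝ) : absM (diagonal w * A) = diagonal w * absM A := by
  ext i j
  simp [absM, diagonal_mul, abs_mul, abs_of_nonneg (hw i)]

theorem sq_mulVec_le_sq_absM_mulVec_abs {ι κ : Type*} [Fintype κ] (B : Matrix ι κ ℝ)
    (v : κ → ℝ) (i : ι) : (B *ᵥ v) i ^ 2 ≤ (absM B *ᵥ |v|) i ^ 2 := by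
  have h : |(B *ᵥ v) i| ≤ (absM B *ᵥ |v|) i := by
    simpa [mulVec, dotProduct, absM, abs_mul] using abs_sum_le_sum_abs (fun j => B i j * v j) univ
  exact sq_le_sq' (abs_le.1 h).1 (abs_le.1 h).2

section Lyapunov

variable {ι : Type*} [Fintype ι] [DecidableEq ι] {M P : Matrix ι ι ℝ}

theorem tendsto_pow_mulVec_of_lyapunov (hP : PosDefM P) (hNeg : NegDefM (Mᵀ * P * M - P))
    (v : ι → ℝ) : Tendsto (fun k => (M ^ k) *ᵥ v) atTop (𝓝 0) := by
  set q : (ι → ℝ) → ℝ := fun w => w ⬝ᵥ (P *ᵥ w)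
  obtain ⟨ε, hε, hdecr⟩ := exists_pos_mul_sq_norm_le
    (f := fun w => -(w ⬝ᵥ ((Mᵀ * P * M - P) *ᵥ w))) (by fun_prop)
    (fun c w => by simp only [dotProduct_mulVec_smul_self]; ring)
    (fun w hw => neg_pos.2 (hNeg w hw))
  have hstep : ∀ k, ε * ‖(M ^ k) *ᵥ v‖ ^ 2 ≤ q ((M ^ k) *ᵥ v) - q ((M ^ (k + 1)) *ᵥ v) := by
    intro k
    have := hdecr ((M ^ k) *ᵥ v)
    rw [dotProduct_mulVec_lyapunov, mulVec_mulVec, ← pow_succ'] at this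
    linarith
  have hsum : ∀ K, ∑ k ∈ range K, ‖(M ^ k) *ᵥ v‖ ^ 2 ≤ q v / ε := by
    intro K
    rw [le_div_iff₀ hε, sum_mul]
    calc ∑ k ∈ range K, ‖(M ^ k) *ᵥ v‖ ^ 2 * ε
        ≤ ∑ k ∈ range K, (q ((M ^ k) *ᵥ v) - q ((M ^ (k + 1)) *ᵥ v)) :=
          sum_le_sum fun k _ => by linarith [hstep k]
      _ = q v - q ((M ^ K) *ᵥ v) := by rw [sum_range_sub']; simp
      _ ≤ q v := by linarith [hP.dotProduct_mulVec_nonneg ((M ^ K) *ᵥ v)]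
  have hsq := (summable_of_sum_range_le (fun k => by positivity) hsum).tendsto_atTop_zero
  rw [tendsto_zero_iff_norm_tendsto_zero]
  simpa [Function.comp_def, Real.sqrt_sq (norm_nonneg _)] using
    (Real.continuous_sqrt.tendsto 0).comp hsq

theorem tendsto_pow_of_lyapunov (hP : PosDefM P) (hNeg : NegDefM (Mᵀ * P * M - P)) :
    Tendsto (fun k => M ^ k) atTop (𝓝 0) := by
  refine tendsto_pi_nhds.2 fun i => tendsto_pi_nhds.2 fun j => ?_
  have := ((continuous_apply i).tendsto 0).comp
    (tendsto_pow_mulVec_of_lyapunov hP hNeg (Pi.single j 1))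
  simpa [Function.comp_def, mulVec_single_one] using this

end Lyapunov

section Nonneg

variable {ι : Type*} [Fintype ι] {M : Matrix ι ι ℝ}

theorem sq_mulVec_le (hM : ∀ i j, 0 ≤ M i j) {x : ι → ℝ} (hx : ∀ i, 0 < x i) (v : ι → ℝ)
    (i : ι) : (M *ᵥ v) i ^ 2 ≤ (M *ᵥ x) i * ∑ j, M i j * v j ^ 2 / x j := by
  refine sum_sq_le_sum_mul_sum_of_sq_le_mul univ (fun j _ => mul_nonneg (hM i j) (hx j).le)
    (fun j _ => by have := hM i j; have := hx j; positivity) fun j _ => le_of_eq ?_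
  have := (hx j).ne'
  field_simp

theorem sum_div_mul_sq_mulVec_lt (hM : ∀ i j, 0 ≤ M i j) {x y : ι → ℝ} (hx : ∀ i, 0 < x i)
    (hy : ∀ i, 0 ≤ y i) (hMx : ∀ i, (M *ᵥ x) i ≤ x i) (hMy : ∀ j, (Mᵀ *ᵥ y) j < y j)
    {v : ι → ℝ} (hv : v ≠ 0) :
    ∑ i, y i / x i * (M *ᵥ v) i ^ 2 < ∑ i, y i / x i * v i ^ 2 := by
  obtain ⟨j₀, hj₀⟩ := Function.ne_iff.1 hv
  have hw : ∀ j, 0 ≤ v j ^ 2 / x j := fun j => div_nonneg (sq_nonneg _) (hx j).le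
  calc ∑ i, y i / x i * (M *ᵥ v) i ^ 2
      ≤ ∑ i, y i / x i * (x i * ∑ j, M i j * v j ^ 2 / x j) := by
        refine sum_le_sum fun i _ => mul_le_mul_of_nonneg_left ?_ (div_nonneg (hy i) (hx i).le)
        exact (sq_mulVec_le hM hx v i).trans (mul_le_mul_of_nonneg_right (hMx i)
          (sum_nonneg fun j _ => by simpa [mul_div_assoc] using mul_nonneg (hM i j) (hw j)))
    _ = ∑ j, v j ^ 2 / x j * (Mᵀ *ᵥ y) j := by
        simp only [mulVec, dotProduct, transpose_apply, mul_sum]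
        rw [sum_comm]
        refine sum_congr rfl fun j _ => sum_congr rfl fun i _ => ?_
        have := (hx i).ne'
        field_simp
    _ < ∑ j, v j ^ 2 / x j * y j :=
        sum_lt_sum (fun j _ => mul_le_mul_of_nonneg_left (hMy j).le (hw j))
          ⟨j₀, mem_univ _,
            mul_lt_mul_of_pos_left (hMy j₀) (div_pos (sq_pos_of_ne_zero hj₀) (hx j₀))⟩
    _ = ∑ i, y i / x i * v i ^ 2 := sum_congr rfl fun j _ => by ring

variable [DecidableEq ι]

theorem eventually_pow_mulVec_one_lt_one (hM : Tendsto (fun k => M ^ k) atTop (𝓝 0)) :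
    ∀ᶠ k in atTop, ∀ i, ((M ^ k) *ᵥ 1) i < 1 := by
  have h : Tendsto (fun k => (M ^ k) *ᵥ 1) atTop (𝓝 0) := by
    simpa [Function.comp_def] using
      ((continuous_id.matrix_mulVec continuous_const).tendsto 0).comp hM
  exact eventually_all.2 fun i =>
    (((continuous_apply i).tendsto 0).comp h).eventually_lt_const zero_lt_one

theorem exists_pos_mulVec_lt_self (hM : ∀ i j, 0 ≤ M i j) {N : ℕ}
    (hN : ∀ i, ((M ^ N) *ᵥ 1) i < 1) : ∃ x : ι → ℝ, (∀ i, 0 < x i) ∧ ∀ i, (M *ᵥ x) i < x i := by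
  set S := ∑ k ∈ range N, M ^ k
  have hS : ∀ i j, 0 ≤ S i j := fun i j => by
    simp only [S, Matrix.sum_apply]
    exact sum_nonneg fun k _ => pow_apply_nonneg hM k i j
  have hgeom : M *ᵥ (S *ᵥ 1) = S *ᵥ 1 + ((M ^ N) *ᵥ 1 - 1) := by
    have h : (M * S) *ᵥ 1 - S *ᵥ 1 = (M ^ N) *ᵥ 1 - 1 := by
      rw [← sub_mulVec, ← sub_one_mul, mul_geom_sum, sub_mulVec, one_mulVec]
    rw [mulVec_mulVec, ← h]; abel
  have hlt : ∀ i, (M *ᵥ (S *ᵥ 1)) i < (S *ᵥ 1) i := fun i => by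
    rw [hgeom]; simp only [Pi.add_apply, Pi.sub_apply, Pi.one_apply]; linarith [hN i]
  refine ⟨S *ᵥ 1, fun i => lt_of_le_of_lt ?_ (hlt i), hlt⟩
  exact sum_nonneg fun j _ => mul_nonneg (hM i j) (sum_nonneg fun l _ => by simpa using hS j l)

theorem exists_diagonal_lyapunov_of_tendsto_pow (hM : ∀ i j, 0 ≤ M i j)
    (hpow : Tendsto (fun k => M ^ k) atTop (𝓝 0)) :
    ∃ d : ι → ℝ, (∀ i, 0 < d i) ∧
      ∀ v, v ≠ 0 → ∑ i, d i * (M *ᵥ v) i ^ 2 < ∑ i, d i * v i ^ 2 := by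
  have hpowT : Tendsto (fun k => Mᵀ ^ k) atTop (𝓝 0) := by
    simpa [Function.comp_def, transpose_pow] using
      (continuous_id.matrix_transpose.tendsto 0).comp hpow
  obtain ⟨N, hrow, hcol⟩ :=
    ((eventually_pow_mulVec_one_lt_one hpow).and (eventually_pow_mulVec_one_lt_one hpowT)).exists
  obtain ⟨x, hx, hMx⟩ := exists_pos_mulVec_lt_self hM hrow
  obtain ⟨y, hy, hMy⟩ := exists_pos_mulVec_lt_self (fun i j => hM j i) hcol
  exact ⟨fun i => y i / x i, fun i => div_pos (hy i) (hx i),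
    fun v hv => sum_div_mul_sq_mulVec_lt hM hx (fun i => (hy i).le) (fun i => (hMx i).le) hMy hv⟩

end Nonneg

/-- **Hu–Wang comparison (Proposition 8 of the paper).** If the Lyapunov inequality
`M̂ᵀ P M̂ - P ≺ 0` holds for some symmetric positive definite `P`, where `M̂ = W |A|`
and `W = diag(L_{p1},…,L_{pn})` with `L_{pi} > 0`, then there is a diagonal matrix `D`
with strictly positive diagonal entries such that `Ãᵀ D Ã - D ≺ 0`, `Ã = W A`. -/
theorem huwang_condition_implies_structured_lyapunov
    (n : ℕ) (A : Matrix (Fin n) (Fin n) ℝ) (Lp : Fin n → ℝ) (hLp : ∀ i, 0 < Lp i)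
    (P : Matrix (Fin n) (Fin n) ℝ)
    (hP : PosDefM P)
    (hNeg : NegDefM ((Matrix.diagonal Lp * absM A)ᵀ * P * (Matrix.diagonal Lp * absM A) - P)) :
    ∃ d : Fin n → ℝ, (∀ i, 0 < d i) ∧
      NegDefM ((Matrix.diagonal Lp * A)ᵀ * Matrix.diagonal d * (Matrix.diagonal Lp * A)
        - Matrix.diagonal d) := by
  rw [← absM_diagonal_mul (fun i => (hLp i).le)] at hNeg
  set B := diagonal Lp * A
  obtain ⟨d, hd, hlyap⟩ := exists_diagonal_lyapunov_of_tendsto_pow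
    (fun i j => abs_nonneg (B i j)) (tendsto_pow_of_lyapunov hP hNeg)
  refine ⟨d, hd, fun v hv => ?_⟩
  rw [dotProduct_mulVec_lyapunov, dotProduct_diagonal_mulVec_self,
    dotProduct_diagonal_mulVec_self, sub_neg]
  calc ∑ i, d i * (B *ᵥ v) i ^ 2 ≤ ∑ i, d i * (absM B *ᵥ |v|) i ^ 2 :=
        sum_le_sum fun i _ => mul_le_mul_of_nonneg_left
          (sq_mulVec_le_sq_absM_mulVec_abs B v i) (hd i).le
    _ < ∑ i, d i * |v| i ^ 2 := hlyap |v| (by simpa using hv)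
    _ = ∑ i, d i * v i ^ 2 := by simp
end
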